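/- arXiv:1012.2074 — 3 statements merged into one kernel-verified Lean document; each statement's English description precedes it below -/
import Mathlib

section
/- With p_*, 𝐧 = 2n, p_{<r}, and w_r as before, suppose r ∈ {1,...,σ-1} satisfies p_r = p_{r+1}. Define the permutation h_r of {1,...,𝐧} by h_r(p_{<r}+j) = p_{<r+1}+j, h_r(p_{<r+1}+j) = p_{<r}+j, h_r(𝐧-p_{<r}-j) = 𝐧-p_{<r+1}-j, h_r(𝐧-p_{<r+1}-j) = 𝐧-p_{<r}-j for j ∈ {1,...,p_r}, fixing all other elements. Then h_r is an involution, h_r w_{r+1} h_r = w_r, and h_r commutes with w_t for every t ∉ {r, r+1}. -/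
/-- `cycleSpec nn a p w` says that the permutation `w` of `{1, ..., nn}` (modeled as a
permutation of `ℕ`, fixing everything outside `{1, ..., nn}`) is the cycle
`a+1 ↦ a+2 ↦ ⋯ ↦ a+p ↦ nn-a-1 ↦ nn-a-2 ↦ ⋯ ↦ nn-a-p ↦ a+1`, fixing all other elements. -/
def cycleSpec (nn a p : ℕ) (w : Equiv.Perm ℕ) : Prop :=
  (∀ j, 1 ≤ j → j < p → w (a + j) = a + j + 1) ∧
  w (a + p) = nn - a - 1 ∧
  (∀ j, 1 ≤ j → j < p → w (nn - a - j) = nn - a - j - 1) ∧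
  w (nn - a - p) = a + 1 ∧
  (∀ k, ¬(a + 1 ≤ k ∧ k ≤ a + p) → ¬(nn - a - p ≤ k ∧ k ≤ nn - a - 1) → w k = k)

/-- `swapSpec nn a a' p h` says that the permutation `h` of `{1, ..., nn}` (modeled as a
permutation of `ℕ`) exchanges `a+j ↔ a'+j` and `nn-a-j ↔ nn-a'-j` for `j ∈ {1, ..., p}`
and fixes all other elements.  (Here `a = p_{<r}`, `a' = p_{<r+1}` and `p = p_r = p_{r+1}`.) -/
def swapSpec (nn a a' p : ℕ) (h : Equiv.Perm ℕ) : Prop :=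
  (∀ j, 1 ≤ j → j ≤ p →
    h (a + j) = a' + j ∧ h (a' + j) = a + j ∧
    h (nn - a - j) = nn - a' - j ∧ h (nn - a' - j) = nn - a - j) ∧
  (∀ k, ¬(a + 1 ≤ k ∧ k ≤ a + p) → ¬(a' + 1 ≤ k ∧ k ≤ a' + p) →
    ¬(nn - a - p ≤ k ∧ k ≤ nn - a - 1) → ¬(nn - a' - p ≤ k ∧ k ≤ nn - a' - 1) → h k = k)

private lemma aux_inv (nn a a' q : ℕ) (h : Equiv.Perm ℕ) (hq : 0 < q)
    (ha' : a' = a + q) (hlt : 2 * (a' + q) < nn)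
    (hh : swapSpec nn a a' q h) : h * h = 1 := by
  obtain ⟨hswap, hfix⟩ := hh
  ext k
  simp only [Equiv.Perm.mul_apply, Equiv.Perm.one_apply]
  by_cases c1 : a + 1 ≤ k ∧ k ≤ a + q
  · obtain ⟨e1, e2, -, -⟩ := hswap (k - a) (by omega) (by omega)
    rw [show a + (k - a) = k by omega] at e1
    rw [e1, e2]; omega
  by_cases c2 : a' + 1 ≤ k ∧ k ≤ a' + q
  · obtain ⟨e1, e2, -, -⟩ := hswap (k - a') (by omega) (by omega)
    rw [show a' + (k - a') = k by omega] at e2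
    rw [e2, e1]; omega
  by_cases c3 : nn - a - q ≤ k ∧ k ≤ nn - a - 1
  · obtain ⟨-, -, e3, e4⟩ := hswap (nn - a - k) (by omega) (by omega)
    rw [show nn - a - (nn - a - k) = k by omega] at e3
    rw [e3, e4]; omega
  by_cases c4 : nn - a' - q ≤ k ∧ k ≤ nn - a' - 1
  · obtain ⟨-, -, e3, e4⟩ := hswap (nn - a' - k) (by omega) (by omega)
    rw [show nn - a' - (nn - a' - k) = k by omega] at e4
    rw [e4, e3]; omega
  rw [hfix k c1 c2 c3 c4, hfix k c1 c2 c3 c4]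

private lemma aux_conj (nn a a' q : ℕ) (h wr wv : Equiv.Perm ℕ) (hq : 0 < q)
    (ha' : a' = a + q) (hlt : 2 * (a' + q) < nn)
    (hh : swapSpec nn a a' q h)
    (hwr : cycleSpec nn a q wr) (hwv : cycleSpec nn a' q wv) :
    h * wv * h = wr := by
  obtain ⟨hswap, hfix⟩ := hh
  obtain ⟨cw1, cw2, cw3, cw4, cw5⟩ := hwr
  obtain ⟨cv1, cv2, cv3, cv4, cv5⟩ := hwv
  ext k
  simp only [Equiv.Perm.mul_apply]
  by_cases c1 : a + 1 ≤ k ∧ k ≤ a + q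
  · by_cases c1' : k < a + q
    · rw [show k = a + (k - a) by omega]
      rw [(hswap (k - a) (by omega) (by omega)).1]
      rw [cv1 (k - a) (by omega) (by omega)]
      rw [cw1 (k - a) (by omega) (by omega)]
      have e := (hswap (k - a + 1) (by omega) (by omega)).2.1
      simp only [← add_assoc] at e
      exact e
    · rw [show k = a + q by omega]
      rw [(hswap q hq le_rfl).1, cv2, cw2]
      exact (hswap 1 le_rfl hq).2.2.2
  by_cases c2 : a' + 1 ≤ k ∧ k ≤ a' + q
  · rw [show k = a' + (k - a') by omega]
    rw [(hswap (k - a') (by omega) (by omega)).2.1]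
    rw [cv5 (a + (k - a')) (by omega) (by omega)]
    rw [(hswap (k - a') (by omega) (by omega)).1]
    rw [cw5 (a' + (k - a')) (by omega) (by omega)]
  by_cases c3 : nn - a - q ≤ k ∧ k ≤ nn - a - 1
  · by_cases c3' : nn - a - q < k
    · rw [show k = nn - a - (nn - a - k) by omega]
      rw [(hswap (nn - a - k) (by omega) (by omega)).2.2.1]
      rw [cv3 (nn - a - k) (by omega) (by omega)]
      rw [cw3 (nn - a - k) (by omega) (by omega)]
      have e := (hswap (nn - a - k + 1) (by omega) (by omega)).2.2.2
      rw [show nn - a' - (nn - a - k + 1) = nn - a' - (nn - a - k) - 1 by omega,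
          show nn - a - (nn - a - k + 1) = nn - a - (nn - a - k) - 1 by omega] at e
      exact e
    · rw [show k = nn - a - q by omega]
      rw [(hswap q hq le_rfl).2.2.1, cv4, cw4]
      exact (hswap 1 le_rfl hq).2.1
  by_cases c4 : nn - a' - q ≤ k ∧ k ≤ nn - a' - 1
  · rw [show k = nn - a' - (nn - a' - k) by omega]
    rw [(hswap (nn - a' - k) (by omega) (by omega)).2.2.2]
    rw [cv5 (nn - a - (nn - a' - k)) (by omega) (by omega)]
    rw [(hswap (nn - a' - k) (by omega) (by omega)).2.2.1]
    rw [cw5 (nn - a' - (nn - a' - k)) (by omega) (by omega)]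
  · rw [hfix k c1 c2 c3 c4, cv5 k c2 c4, hfix k c1 c2 c3 c4, cw5 k c1 c3]

private lemma aux_comm (nn a a' q b q' : ℕ) (h wt : Equiv.Perm ℕ)
    (hq : 0 < q) (hq' : 0 < q')
    (ha' : a' = a + q) (hlt : 2 * (a' + q) < nn) (hbq : 2 * (b + q') ≤ nn)
    (hdisj : b + q' ≤ a ∨ a' + q ≤ b)
    (hh : swapSpec nn a a' q h) (hwt : cycleSpec nn b q' wt) :
    Commute h wt := by
  obtain ⟨hswap, hfix⟩ := hh
  obtain ⟨d1, d2, d3, d4, d5⟩ := hwt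
  show h * wt = wt * h
  ext k
  simp only [Equiv.Perm.mul_apply]
  by_cases e1 : b + 1 ≤ k ∧ k ≤ b + q'
  · by_cases e1' : k < b + q'
    · rw [show k = b + (k - b) by omega, d1 (k - b) (by omega) (by omega),
          hfix (b + (k - b)) (by omega) (by omega) (by omega) (by omega),
          d1 (k - b) (by omega) (by omega),
          hfix (b + (k - b) + 1) (by omega) (by omega) (by omega) (by omega)]
    · rw [show k = b + q' by omega, d2,
          hfix (b + q') (by omega) (by omega) (by omega) (by omega), d2,
          hfix (nn - b - 1) (by omega) (by omega) (by omega) (by omega)]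
  by_cases e2 : nn - b - q' ≤ k ∧ k ≤ nn - b - 1
  · by_cases e2' : nn - b - q' < k
    · rw [show k = nn - b - (nn - b - k) by omega,
          d3 (nn - b - k) (by omega) (by omega),
          hfix (nn - b - (nn - b - k)) (by omega) (by omega) (by omega) (by omega),
          d3 (nn - b - k) (by omega) (by omega),
          hfix (nn - b - (nn - b - k) - 1) (by omega) (by omega) (by omega) (by omega)]
    · rw [show k = nn - b - q' by omega, d4,
          hfix (nn - b - q') (by omega) (by omega) (by omega) (by omega), d4,
          hfix (b + 1) (by omega) (by omega) (by omega) (by omega)]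
  by_cases c1 : a + 1 ≤ k ∧ k ≤ a + q
  · rw [show k = a + (k - a) by omega, d5 (a + (k - a)) (by omega) (by omega),
        (hswap (k - a) (by omega) (by omega)).1,
        d5 (a' + (k - a)) (by omega) (by omega)]
  by_cases c2 : a' + 1 ≤ k ∧ k ≤ a' + q
  · rw [show k = a' + (k - a') by omega, d5 (a' + (k - a')) (by omega) (by omega),
        (hswap (k - a') (by omega) (by omega)).2.1,
        d5 (a + (k - a')) (by omega) (by omega)]
  by_cases c3 : nn - a - q ≤ k ∧ k ≤ nn - a - 1
  · rw [show k = nn - a - (nn - a - k) by omega,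
        d5 (nn - a - (nn - a - k)) (by omega) (by omega),
        (hswap (nn - a - k) (by omega) (by omega)).2.2.1,
        d5 (nn - a' - (nn - a - k)) (by omega) (by omega)]
  by_cases c4 : nn - a' - q ≤ k ∧ k ≤ nn - a' - 1
  · rw [show k = nn - a' - (nn - a' - k) by omega,
        d5 (nn - a' - (nn - a' - k)) (by omega) (by omega),
        (hswap (nn - a' - k) (by omega) (by omega)).2.2.2,
        d5 (nn - a - (nn - a' - k)) (by omega) (by omega)]
  · rw [d5 k e1 e2, hfix k c1 c2 c3 c4, d5 k e1 e2]

theorem statement3 (n σ : ℕ) (hσ : 1 ≤ σ) (p : ℕ → ℕ)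
    (hpos : ∀ r, 1 ≤ r → r ≤ σ → 0 < p r)
    (hdec : ∀ r r', 1 ≤ r → r ≤ r' → r' ≤ σ → p r' ≤ p r)
    (hsum : ∑ r ∈ Finset.Icc 1 σ, p r = n)
    (w : ℕ → Equiv.Perm ℕ)
    (hw : ∀ t, 1 ≤ t → t ≤ σ →
      cycleSpec (2 * n) (∑ r' ∈ Finset.Icc 1 (t - 1), p r') (p t) (w t))
    (r : ℕ) (hr1 : 1 ≤ r) (hr2 : r + 1 ≤ σ) (hpr : p r = p (r + 1))
    (h : Equiv.Perm ℕ)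
    (hh : swapSpec (2 * n) (∑ r' ∈ Finset.Icc 1 (r - 1), p r')
      (∑ r' ∈ Finset.Icc 1 r, p r') (p r) h) :
    h * h = 1 ∧ h * w (r + 1) * h = w r ∧
    (∀ t, 1 ≤ t → t ≤ σ → t ≠ r → t ≠ r + 1 → Commute h (w t)) := by
  set a := ∑ r' ∈ Finset.Icc 1 (r - 1), p r' with ha_def
  set a' := ∑ r' ∈ Finset.Icc 1 r, p r' with ha'_def
  have hp : 0 < p r := hpos r hr1 (by omega)
  have ha' : a' = a + p r := by
    rw [ha'_def, ha_def]
    conv_lhs => rw [show r = (r - 1) + 1 by omega]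
    rw [Finset.sum_Icc_succ_top (by omega), show r - 1 + 1 = r by omega]
  have hA : ∑ r' ∈ Finset.Icc 1 (r + 1), p r' = a' + p r := by
    rw [Finset.sum_Icc_succ_top (by omega), ← hpr, ha'_def]
  have hle : a' + p r ≤ n := by
    rw [← hA, ← hsum]
    exact Finset.sum_le_sum_of_subset (Finset.Icc_subset_Icc_right hr2)
  have hlt : a' + p r < n := by
    rcases Nat.lt_or_ge (a' + p r) n with hlt | hge
    · exact hlt
    exfalso
    have heq : a' + p r = n := le_antisymm hle hge
    obtain ⟨e1, e2, e3, e4⟩ := hh.1 (p r) hp le_rfl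
    rw [show a' + p r = n from heq] at e2
    rw [show 2 * n - a' - p r = n by omega] at e4
    omega
  have hcv : cycleSpec (2 * n) a' (p r) (w (r + 1)) := by
    have := hw (r + 1) (by omega) hr2
    rw [Nat.add_sub_cancel, ← ha'_def, ← hpr] at this
    exact this
  refine ⟨aux_inv (2 * n) a a' (p r) h hp ha' (by omega) hh, 
    aux_conj (2 * n) a a' (p r) h (w r) (w (r + 1)) hp ha' (by omega) hh
      (hw r hr1 (by omega)) hcv, ?_⟩
  intro t ht1 ht2 htr htr1
  have hq' : 0 < p t := hpos t ht1 ht2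
  have hsum_t : ∑ r' ∈ Finset.Icc 1 t, p r'
      = (∑ r' ∈ Finset.Icc 1 (t - 1), p r') + p t := by
    conv_lhs => rw [show t = (t - 1) + 1 by omega]
    rw [Finset.sum_Icc_succ_top (by omega), show t - 1 + 1 = t by omega]
  have hbq : (∑ r' ∈ Finset.Icc 1 (t - 1), p r') + p t ≤ n := by
    rw [← hsum_t, ← hsum]
    exact Finset.sum_le_sum_of_subset (Finset.Icc_subset_Icc_right ht2)
  have hdisj : (∑ r' ∈ Finset.Icc 1 (t - 1), p r') + p t ≤ a ∨
      a' + p r ≤ ∑ r' ∈ Finset.Icc 1 (t - 1), p r' := by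
    rcases Nat.lt_or_ge t r with hlt' | hge'
    · left
      rw [← hsum_t, ha_def]
      exact Finset.sum_le_sum_of_subset (Finset.Icc_subset_Icc_right (by omega))
    · right
      rw [← hA]
      exact Finset.sum_le_sum_of_subset (Finset.Icc_subset_Icc_right (by omega))
  exact aux_comm (2 * n) a a' (p r) (∑ r' ∈ Finset.Icc 1 (t - 1), p r') (p t)
    h (w t) hp hq' ha' (by omega) (by omega) hdisj hh (hw t ht1 ht2)
end

section
/- With p_*, w_r, h_r as before (and p_r = p_{r+1}), setting w = w_1 w_2 ⋯ w_σ, the element h_r commutes with w: h_r w = w h_r. -/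
/-- The support predicate of a cycle. -/
def cycP (nn a p k : ℕ) : Prop :=
  (a + 1 ≤ k ∧ k ≤ a + p) ∨ (nn - a - p ≤ k ∧ k ≤ nn - a - 1)

/-- The support predicate of a swap. -/
def swQ (nn a a' p k : ℕ) : Prop :=
  (a + 1 ≤ k ∧ k ≤ a + p) ∨ (a' + 1 ≤ k ∧ k ≤ a' + p) ∨
  (nn - a - p ≤ k ∧ k ≤ nn - a - 1) ∨ (nn - a' - p ≤ k ∧ k ≤ nn - a' - 1)

lemma cycle_fix {nn a p : ℕ} {w : Equiv.Perm ℕ} (hw : cycleSpec nn a p w) :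
    ∀ k, ¬ cycP nn a p k → w k = k := by
  intro k hk
  exact hw.2.2.2.2 k (fun c => hk (Or.inl c)) (fun c => hk (Or.inr c))

lemma cycle_closed {nn a p : ℕ} {w : Equiv.Perm ℕ} (hw : cycleSpec nn a p w)
    (hp : 1 ≤ p) (hb : 2 * (a + p) ≤ nn) :
    ∀ k, cycP nn a p k → cycP nn a p (w k) := by
  obtain ⟨h1, h2, h3, h4, _⟩ := hw
  intro k hk
  simp only [cycP] at hk ⊢
  rcases hk with ⟨hk1, hk2⟩ | ⟨hk1, hk2⟩
  · have hkj : k = a + (k - a) := by omega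
    set j := k - a with hjdef
    have hj1 : 1 ≤ j := by omega
    have hjp : j ≤ p := by omega
    by_cases hlt : j < p
    · rw [hkj, h1 j hj1 hlt]; left; omega
    · have hje : j = p := by omega
      rw [hkj, hje, h2]; right; omega
  · have hkj : k = nn - a - (nn - a - k) := by omega
    set j := nn - a - k with hjdef
    have hj1 : 1 ≤ j := by omega
    have hjp : j ≤ p := by omega
    by_cases hlt : j < p
    · rw [hkj, h3 j hj1 hlt]; right; omega
    · have hje : j = p := by omega
      rw [hkj, hje, h4]; left; omega

lemma swap_fix {nn a a' p : ℕ} {h : Equiv.Perm ℕ} (hh : swapSpec nn a a' p h) :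
    ∀ k, ¬ swQ nn a a' p k → h k = k := by
  intro k hk
  exact hh.2 k (fun c => hk (Or.inl c)) (fun c => hk (Or.inr (Or.inl c)))
    (fun c => hk (Or.inr (Or.inr (Or.inl c)))) (fun c => hk (Or.inr (Or.inr (Or.inr c))))

lemma swap_closed {nn a a' p : ℕ} {h : Equiv.Perm ℕ} (hh : swapSpec nn a a' p h)
    (hp : 1 ≤ p) (hb : 2 * (a + p) ≤ nn) (hb' : 2 * (a' + p) ≤ nn) :
    ∀ k, swQ nn a a' p k → swQ nn a a' p (h k) := by
  obtain ⟨m, _⟩ := hh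
  intro k hk
  simp only [swQ] at hk ⊢
  rcases hk with ⟨hk1, hk2⟩ | ⟨hk1, hk2⟩ | ⟨hk1, hk2⟩ | ⟨hk1, hk2⟩
  · have hkj : k = a + (k - a) := by omega
    set j := k - a with hjdef
    have hj1 : 1 ≤ j := by omega
    have hjp : j ≤ p := by omega
    rw [hkj, (m j hj1 hjp).1]; right; left; omega
  · have hkj : k = a' + (k - a') := by omega
    set j := k - a' with hjdef
    have hj1 : 1 ≤ j := by omega
    have hjp : j ≤ p := by omega
    rw [hkj, (m j hj1 hjp).2.1]; left; omega
  · have hkj : k = nn - a - (nn - a - k) := by omega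
    set j := nn - a - k with hjdef
    have hj1 : 1 ≤ j := by omega
    have hjp : j ≤ p := by omega
    rw [hkj, (m j hj1 hjp).2.2.1]; right; right; right; omega
  · have hkj : k = nn - a' - (nn - a' - k) := by omega
    set j := nn - a' - k with hjdef
    have hj1 : 1 ≤ j := by omega
    have hjp : j ≤ p := by omega
    rw [hkj, (m j hj1 hjp).2.2.2]; right; right; left; omega

lemma swapSpec_symm {nn a a' p : ℕ} {h : Equiv.Perm ℕ} (hh : swapSpec nn a a' p h) :
    swapSpec nn a' a p h := by
  obtain ⟨m, fix⟩ := hh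
  refine ⟨fun j hj1 hj2 => ?_, fun k h1 h2 h3 h4 => fix k h2 h1 h4 h3⟩
  obtain ⟨x1, x2, x3, x4⟩ := m j hj1 hj2
  exact ⟨x2, x1, x4, x3⟩

/-- Two permutations with disjoint "supports" commute. -/
lemma commute_of_disj {f g : Equiv.Perm ℕ} {P Q : ℕ → Prop}
    (hf1 : ∀ k, ¬ P k → f k = k) (hf2 : ∀ k, P k → P (f k))
    (hg1 : ∀ k, ¬ Q k → g k = k) (hg2 : ∀ k, Q k → Q (g k))
    (hd : ∀ k, P k → ¬ Q k) : f * g = g * f := by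
  ext k
  simp only [Equiv.Perm.mul_apply]
  by_cases hP : P k
  · have hgk : g k = k := hg1 k (hd k hP)
    rw [hgk, hg1 _ (hd _ (hf2 k hP))]
  · by_cases hQ : Q k
    · have hfk : f k = k := hf1 k hP
      have hng : ¬ P (g k) := fun hPg => hd _ hPg (hg2 k hQ)
      rw [hfk, hf1 _ hng]
    · rw [hg1 k hQ, hf1 k hP, hg1 k hQ]

/-- Conjugating a cycle by a block swap gives the other cycle. -/
lemma swap_conj {nn a a' p : ℕ} {w1 w2 h : Equiv.Perm ℕ}
    (hw1 : cycleSpec nn a p w1) (hw2 : cycleSpec nn a' p w2)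
    (hh : swapSpec nn a a' p h) (hp : 1 ≤ p)
    (hb : 2 * (a + p) < nn) (hb' : 2 * (a' + p) < nn)
    (hd : a + p ≤ a' ∨ a' + p ≤ a) :
    h * w1 = w2 * h := by
  ext k
  simp only [Equiv.Perm.mul_apply]
  obtain ⟨c1, c2, c3, c4, c5⟩ := hw1
  obtain ⟨d1, d2, d3, d4, d5⟩ := hw2
  obtain ⟨m, mfix⟩ := hh
  by_cases hF1 : a + 1 ≤ k ∧ k ≤ a + p
  · obtain ⟨hk1, hk2⟩ := hF1
    have hkj : k = a + (k - a) := by omega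
    set j := k - a with hjdef
    have hj1 : 1 ≤ j := by omega
    have hjp : j ≤ p := by omega
    by_cases hlt : j < p
    · have e1 : w1 k = a + j + 1 := by rw [hkj]; exact c1 j hj1 hlt
      have e2 : h (a + j + 1) = a' + j + 1 := (m (j+1) (by omega) (by omega)).1
      have e3 : h k = a' + j := by rw [hkj]; exact (m j hj1 hjp).1
      have e4 : w2 (a' + j) = a' + j + 1 := d1 j hj1 hlt
      rw [e1, e2, e3, e4]
    · have hje : j = p := by omega
      have hkp : k = a + p := by omega
      have e1 : w1 k = nn - a - 1 := by rw [hkp]; exact c2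
      have e2 : h (nn - a - 1) = nn - a' - 1 := (m 1 le_rfl hp).2.2.1
      have e3 : h k = a' + p := by rw [hkp]; exact (m p hp le_rfl).1
      have e4 : w2 (a' + p) = nn - a' - 1 := d2
      rw [e1, e2, e3, e4]
  · by_cases hM1 : nn - a - p ≤ k ∧ k ≤ nn - a - 1
    · obtain ⟨hk1, hk2⟩ := hM1
      have hkj : k = nn - a - (nn - a - k) := by omega
      set j := nn - a - k with hjdef
      have hj1 : 1 ≤ j := by omega
      have hjp : j ≤ p := by omega
      by_cases hlt : j < p
      · have e1 : w1 k = nn - a - j - 1 := by rw [hkj]; exact c3 j hj1 hlt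
        have e2 : h (nn - a - j - 1) = nn - a' - j - 1 := (m (j+1) (by omega) (by omega)).2.2.1
        have e3 : h k = nn - a' - j := by rw [hkj]; exact (m j hj1 hjp).2.2.1
        have e4 : w2 (nn - a' - j) = nn - a' - j - 1 := d3 j hj1 hlt
        rw [e1, e2, e3, e4]
      · have hje : j = p := by omega
        have hkp : k = nn - a - p := by omega
        have e1 : w1 k = a + 1 := by rw [hkp]; exact c4
        have e2 : h (a + 1) = a' + 1 := (m 1 le_rfl hp).1
        have e3 : h k = nn - a' - p := by rw [hkp]; exact (m p hp le_rfl).2.2.1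
        have e4 : w2 (nn - a' - p) = a' + 1 := d4
        rw [e1, e2, e3, e4]
    · by_cases hF2 : a' + 1 ≤ k ∧ k ≤ a' + p
      · obtain ⟨hk1, hk2⟩ := hF2
        have hkj : k = a' + (k - a') := by omega
        set j := k - a' with hjdef
        have hj1 : 1 ≤ j := by omega
        have hjp : j ≤ p := by omega
        have e1 : w1 k = k := c5 k hF1 hM1
        have e3 : h k = a + j := by rw [hkj]; exact (m j hj1 hjp).2.1
        have e4 : w2 (a + j) = a + j := d5 _ (by omega) (by omega)
        rw [e1, e3, e4]
      · by_cases hM2 : nn - a' - p ≤ k ∧ k ≤ nn - a' - 1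
        · obtain ⟨hk1, hk2⟩ := hM2
          have hkj : k = nn - a' - (nn - a' - k) := by omega
          set j := nn - a' - k with hjdef
          have hj1 : 1 ≤ j := by omega
          have hjp : j ≤ p := by omega
          have e1 : w1 k = k := c5 k hF1 hM1
          have e3 : h k = nn - a - j := by rw [hkj]; exact (m j hj1 hjp).2.2.2
          have e4 : w2 (nn - a - j) = nn - a - j := d5 _ (by omega) (by omega)
          rw [e1, e3, e4]
        · have e1 : w1 k = k := c5 k hF1 hM1
          have e2 : h k = k := mfix k hF1 hF2 hM1 hM2
          have e3 : w2 k = k := d5 k hF2 hM2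
          rw [e1, e2, e3]

theorem statement4 (n σ : ℕ) (hσ : 1 ≤ σ) (p : ℕ → ℕ)
    (hpos : ∀ r, 1 ≤ r → r ≤ σ → 0 < p r)
    (hdec : ∀ r r', 1 ≤ r → r ≤ r' → r' ≤ σ → p r' ≤ p r)
    (hsum : ∑ r ∈ Finset.Icc 1 σ, p r = n)
    (w : ℕ → Equiv.Perm ℕ)
    (hw : ∀ t, 1 ≤ t → t ≤ σ →
      cycleSpec (2 * n) (∑ r' ∈ Finset.Icc 1 (t - 1), p r') (p t) (w t))
    (r : ℕ) (hr1 : 1 ≤ r) (hr2 : r + 1 ≤ σ) (hpr : p r = p (r + 1))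
    (h : Equiv.Perm ℕ)
    (hh : swapSpec (2 * n) (∑ r' ∈ Finset.Icc 1 (r - 1), p r')
      (∑ r' ∈ Finset.Icc 1 r, p r') (p r) h)
    (wtot : Equiv.Perm ℕ)
    (hwtot : wtot = ((List.range σ).map fun i => w (i + 1)).prod) :
    h * wtot = wtot * h := by
  classical
  set S : ℕ → ℕ := fun t => ∑ r' ∈ Finset.Icc 1 t, p r' with hSdef
  have hstep : ∀ t, S (t + 1) = S t + p (t + 1) := by
    intro t
    simp only [hSdef]
    rw [Finset.sum_Icc_succ_top (by omega)]
  have hmono : ∀ t t', t ≤ t' → S t ≤ S t' := by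
    intro t t' htt
    exact Finset.sum_le_sum_of_subset (Finset.Icc_subset_Icc_right htt)
  have hSn : S σ = n := hsum
  have hSt : ∀ t, 1 ≤ t → S t = S (t - 1) + p t := by
    intro t ht
    have := hstep (t - 1)
    rw [show t - 1 + 1 = t by omega] at this
    exact this
  have hSle : ∀ t, t ≤ σ → S t ≤ n := fun t ht => hSn ▸ hmono t σ ht
  have hw' : ∀ t, 1 ≤ t → t ≤ σ → cycleSpec (2 * n) (S (t - 1)) (p t) (w t) := hw
  have hh' : swapSpec (2 * n) (S (r - 1)) (S r) (p r) h := hh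
  have hp_r : 1 ≤ p r := hpos r hr1 (by omega)
  have hp_r1 : 1 ≤ p (r + 1) := hpos (r + 1) (by omega) hr2
  have hSr : S r = S (r - 1) + p r := hSt r hr1
  have hSr1 : S (r + 1) = S r + p (r + 1) := hstep r
  by_cases hcase : r + 1 = σ
  · exfalso
    obtain ⟨m, _⟩ := hh'
    have key := m (p r) hp_r le_rfl
    have hn1 : S r + p r = n := by
      have := hSn
      rw [← hcase] at this
      omega
    have q1 := key.2.1
    have q2 := key.2.2.2
    rw [show S r + p r = n from hn1] at q1
    rw [show 2 * n - S r - p r = n by omega] at q2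
    rw [q1] at q2
    omega
  · -- r + 1 < σ
    have hrσ : r + 1 < σ := by omega
    have hSσ1 : S σ = S (σ - 1) + p σ := hSt σ hσ
    have hpσ : 1 ≤ p σ := hpos σ hσ le_rfl
    have hb : S (r + 1) < n := by
      have h1 : S (r + 1) ≤ S (σ - 1) := hmono _ _ (by omega)
      omega
    have hSrle : S r ≤ n := hSle r (by omega)
    have hSr1le : S (r - 1) ≤ n := hSle (r - 1) (by omega)
    -- conjugation relations for blocks r and r+1
    have hcyc_r : cycleSpec (2 * n) (S (r - 1)) (p r) (w r) := hw' r hr1 (by omega)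
    have hcyc_r1 : cycleSpec (2 * n) (S r) (p r) (w (r + 1)) := by
      rw [hpr]; exact hw' (r + 1) (by omega) (by omega)
    have hbb : 2 * (S (r - 1) + p r) < 2 * n := by omega
    have hbb' : 2 * (S r + p r) < 2 * n := by omega
    have hx1 : h * w r = w (r + 1) * h :=
      swap_conj hcyc_r hcyc_r1 hh' hp_r hbb hbb' (Or.inl (by omega))
    have hx2 : h * w (r + 1) = w r * h :=
      swap_conj hcyc_r1 hcyc_r (swapSpec_symm hh') hp_r hbb' hbb (Or.inr (by omega))
    have hcomm12 : w r * w (r + 1) = w (r + 1) * w r := by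
      refine commute_of_disj (P := cycP (2*n) (S (r-1)) (p r)) (Q := cycP (2*n) (S r) (p r))
        (cycle_fix hcyc_r) (cycle_closed hcyc_r hp_r (by omega))
        (cycle_fix hcyc_r1) (cycle_closed hcyc_r1 hp_r (by omega)) ?_
      intro k hk
      simp only [cycP] at hk ⊢
      omega
    -- commutation with all other cycles
    have hcomm_other : ∀ t, 1 ≤ t → t ≤ σ → t ≠ r → t ≠ r + 1 → h * w t = w t * h := by
      intro t ht1 ht2 ht3 ht4
      have hcyc : cycleSpec (2 * n) (S (t - 1)) (p t) (w t) := hw' t ht1 ht2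
      have hpt : 1 ≤ p t := hpos t ht1 ht2
      have hSt' : S t = S (t - 1) + p t := hSt t ht1
      have hStle : S t ≤ n := hSle t ht2
      have hdisj : (S (t-1)) + p t ≤ S (r - 1) ∨ S (r + 1) ≤ S (t - 1) := by
        rcases lt_or_gt_of_ne ht3 with hlt | hgt
        · left
          have : S t ≤ S (r - 1) := hmono _ _ (by omega)
          omega
        · right
          exact hmono _ _ (by omega)
      refine commute_of_disj (P := swQ (2*n) (S (r-1)) (S r) (p r)) (Q := cycP (2*n) (S (t-1)) (p t))
        (swap_fix hh') (swap_closed hh' hp_r (by omega) (by omega))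
        (cycle_fix hcyc) (cycle_closed hcyc hpt (by omega)) ?_
      intro k hk
      simp only [cycP, swQ] at hk ⊢
      omega
    -- decompose the product
    obtain ⟨m', hm'⟩ : ∃ m', σ = (r - 1) + 2 + m' := ⟨σ - (r + 1), by omega⟩
    subst hwtot
    have hprod : ((List.range σ).map fun i => w (i + 1)).prod
        = (((List.range (r-1)).map fun i => w (i + 1)).prod * (w r * w (r + 1))) *
          (((List.range m').map fun i => w ((r - 1) + 2 + i + 1)).prod) := by
      rw [hm', List.range_add, List.range_add]
      simp only [List.map_append, List.prod_append, List.map_map, List.range_succ,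
        List.range_zero, List.nil_append, List.map_cons, List.map_nil, List.prod_cons,
        List.prod_nil, mul_one, Function.comp, Nat.add_zero]
      rw [show r - 1 + 1 = r by omega]
      rfl
    rw [hprod]
    have cA : Commute h (((List.range (r-1)).map fun i => w (i + 1)).prod) := by
      apply Commute.list_prod_right
      intro x hx
      simp only [List.mem_map, List.mem_range] at hx
      obtain ⟨i, hi, rfl⟩ := hx
      exact hcomm_other (i + 1) (by omega) (by omega) (by omega) (by omega)
    have cM : Commute h (w r * w (r + 1)) := by
      show h * _ = _ * h
      calc h * (w r * w (r + 1)) = (h * w r) * w (r + 1) := by rw [mul_assoc]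
        _ = w (r + 1) * (h * w (r + 1)) := by rw [hx1, mul_assoc]
        _ = w (r + 1) * (w r * h) := by rw [hx2]
        _ = (w r * w (r + 1)) * h := by rw [← mul_assoc, ← hcomm12, mul_assoc]
    have cB : Commute h (((List.range m').map fun i => w ((r - 1) + 2 + i + 1)).prod) := by
      apply Commute.list_prod_right
      intro x hx
      simp only [List.mem_map, List.mem_range] at hx
      obtain ⟨i, hi, rfl⟩ := hx
      exact hcomm_other ((r - 1) + 2 + i + 1) (by omega) (by omega) (by omega) (by omega)
    exact (cA.mul_right cM).mul_right cB
end

section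
/- Let k be a field, n ≥ 2, V an n-dimensional k-vector space with fixed basis element ω of Λⁿ V, and let Z̃ = {(g,v) ∈ SL(V) × V : v ∧ g(v) ∧ ... ∧ g^{n-1}(v) = ω}. The map sending (g,v) to (a_1,...,a_{n-1}) ∈ k^{n-1}, where gⁿ(v) = (-1)^{n-1} v + a_1 g(v) + ... + a_{n-1} g^{n-1}(v), induces a bijection from the set of SL(V)-orbits on Z̃ (for the action x·(g,v) = (xgx⁻¹, x(v))) onto k^{n-1}. -/
open ExteriorAlgebra

/-- The wedge `v ∧ g(v) ∧ ⋯ ∧ g^{n-1}(v)` in `Λⁿ V` (viewed inside the exterior algebra). -/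
noncomputable def cyclicWedge (k : Type*) [Field k] (V : Type*) [AddCommGroup V] [Module k V]
    (n : ℕ) (g : V ≃ₗ[k] V) (v : V) : ExteriorAlgebra k V :=
  ExteriorAlgebra.ιMulti k n (fun i : Fin n => (g ^ (i : ℕ)) v)

open ExteriorAlgebra
open Module

section Aux
variable {k : Type*} [Field k] {V : Type*} [AddCommGroup V] [Module k V]

/-- Top-degree alternating maps are multiples of the determinant. -/
theorem aux_top {n : ℕ} {N : Type*} [AddCommGroup N] [Module k N]
    (B : Basis (Fin n) k V) (f : V [⋀^Fin n]→ₗ[k] N) (u : Fin n → V) :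
    f u = B.det u • f B := by
  have h : f = B.det.smulRight (f B) := by
    refine Basis.ext_alternating B fun v hv => ?_
    let σ : Equiv.Perm (Fin n) := Equiv.ofBijective v (Finite.injective_iff_bijective.1 hv)
    have hvσ : (fun i => B (v i)) = ⇑B ∘ ⇑σ := rfl
    rw [hvσ, AlternatingMap.map_perm, AlternatingMap.smulRight_apply,
      AlternatingMap.map_perm, Basis.det_self]
    rcases Int.units_eq_one_or (Equiv.Perm.sign σ) with hs | hs <;>
      simp [hs]
  conv_lhs => rw [h]
  rfl

theorem aux_det {m : ℕ} (B : Basis (Fin (m + 1)) k V) (r : Fin (m + 1) → k) :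
    B.det (Function.update (fun i => B (finRotate (m + 1) i)) (Fin.last m) (∑ j, r j • B j))
      = (-1 : k) ^ m * r 0 := by
  classical
  set u : Fin (m + 1) → V := fun i => B (finRotate (m + 1) i) with hu
  have hul : u (Fin.last m) = B 0 := by simp [hu, finRotate_last]
  have hdu : B.det u = (-1 : k) ^ m := by
    have : u = ⇑B ∘ ⇑(finRotate (m + 1)) := rfl
    rw [this, AlternatingMap.map_perm, Basis.det_self, sign_finRotate]
    rcases Nat.even_or_odd m with hme | hme <;>
      simp [hme.neg_one_pow]
  rw [AlternatingMap.map_update_sum]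
  rw [Finset.sum_eq_single 0]
  · rw [AlternatingMap.map_update_smul, ← hul, Function.update_eq_self, hdu, smul_eq_mul]
    ring
  · intro j _ hj
    rw [AlternatingMap.map_update_smul]
    have hj' : B j = u ((finRotate (m + 1)).symm j) := by
      show B j = B (finRotate (m + 1) ((finRotate (m + 1)).symm j))
      rw [Equiv.apply_symm_apply]
    have hne : Fin.last m ≠ (finRotate (m + 1)).symm j := by
      intro hcon
      apply hj
      rw [← Equiv.apply_symm_apply (finRotate (m + 1)) j, ← hcon, finRotate_last]
    rw [hj', AlternatingMap.map_update_self _ _ hne, smul_zero]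
  · simp

end Aux

section Aux2
variable {k : Type*} [Field k] {V : Type*} [AddCommGroup V] [Module k V]

theorem aux_key {m : ℕ} (hdim : Module.finrank k V = m + 1)
    (g : V ≃ₗ[k] V) (v : V) (hdet : LinearMap.det (g : V →ₗ[k] V) = 1)
    (h : LinearIndependent k (fun i : Fin (m + 1) => (g ^ (i : ℕ)) v)) :
    ∃ a : Fin m → k,
      (g ^ (m + 1)) v = ((-1 : k) ^ m) • v + ∑ i : Fin m, a i • (g ^ ((i : ℕ) + 1)) v := by
  classical
  let b : Basis (Fin (m + 1)) k V :=
    basisOfLinearIndependentOfCardEqFinrank h (by simp [hdim])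
  have hb : ∀ i, b i = (g ^ (i : ℕ)) v := fun i => by
    simp [b]
  set r : Fin (m + 1) → k := fun j => b.repr ((g ^ (m + 1)) v) j with hr
  have hsum : (g ^ (m + 1)) v = ∑ j, r j • b j := (b.sum_repr _).symm
  have hgb : (⇑(g : V →ₗ[k] V) ∘ ⇑b)
      = Function.update (fun i => b (finRotate (m + 1) i)) (Fin.last m) (∑ j, r j • b j) := by
    funext i
    by_cases hi : i = Fin.last m
    · subst hi
      rw [Function.update_self, ← hsum]
      show g (b (Fin.last m)) = _
      rw [hb]
      show g ((g ^ m) v) = (g ^ (m + 1)) v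
      rw [pow_succ']
      rfl
    · rw [Function.update_of_ne hi]
      show g (b i) = b (finRotate (m + 1) i)
      rw [hb, hb]
      have hv : ((finRotate (m + 1) i : Fin (m + 1)) : ℕ) = (i : ℕ) + 1 := by
        rw [finRotate_succ_apply]
        exact Fin.val_add_one_of_lt (Fin.lt_last_iff_ne_last.mpr hi)
      rw [hv, pow_succ']
      rfl
  have hdet2 : (-1 : k) ^ m * r 0 = 1 := by
    have h1 := Basis.det_comp b (g : V →ₗ[k] V) ⇑b
    rw [Basis.det_self, mul_one, hdet, hgb, aux_det] at h1
    exact h1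
  have hsq : ((-1 : k) ^ m) * ((-1 : k) ^ m) = 1 := by
    rw [← mul_pow]; norm_num
  have hr0 : r 0 = (-1 : k) ^ m := by
    calc r 0 = ((-1 : k) ^ m * (-1 : k) ^ m) * r 0 := by rw [hsq, one_mul]
    _ = (-1 : k) ^ m * ((-1 : k) ^ m * r 0) := by ring
    _ = (-1 : k) ^ m := by rw [hdet2, mul_one]
  refine ⟨fun i => r i.succ, ?_⟩
  rw [hsum, Fin.sum_univ_succ]
  congr 1
  · rw [hr0, hb]
    simp
  · refine Finset.sum_congr rfl fun i _ => ?_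
    rw [hb]
    rfl

theorem aux_uniq {m : ℕ} (hdim : Module.finrank k V = m + 1)
    (g : V ≃ₗ[k] V) (v : V)
    (h : LinearIndependent k (fun i : Fin (m + 1) => (g ^ (i : ℕ)) v))
    (a a' : Fin m → k)
    (ha : (g ^ (m + 1)) v = ((-1 : k) ^ m) • v + ∑ i : Fin m, a i • (g ^ ((i : ℕ) + 1)) v)
    (ha' : (g ^ (m + 1)) v = ((-1 : k) ^ m) • v + ∑ i : Fin m, a' i • (g ^ ((i : ℕ) + 1)) v) :
    a = a' := by
  classical
  let b : Basis (Fin (m + 1)) k V :=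
    basisOfLinearIndependentOfCardEqFinrank h (by simp [hdim])
  have hb : ∀ i, b i = (g ^ (i : ℕ)) v := fun i => by simp [b]
  have key : ∀ c : Fin m → k,
      (g ^ (m + 1)) v = ((-1 : k) ^ m) • v + ∑ i : Fin m, c i • (g ^ ((i : ℕ) + 1)) v →
      ∀ i : Fin m, c i = b.repr ((g ^ (m + 1)) v) i.succ := by
    intro c hc i
    have hs : (g ^ (m + 1)) v
        = ∑ j, (Fin.cases ((-1 : k) ^ m) c : Fin (m + 1) → k) j • b j := by
      rw [Fin.sum_univ_succ, hc]
      congr 1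
      · rw [hb]; simp
      · refine Finset.sum_congr rfl fun j _ => ?_
        rw [hb]
        simp
    rw [hs, b.repr_sum_self]
    simp
  funext i
  rw [key a ha i, key a' ha' i]

end Aux2
/-- There is a map `Φ` from `Z̃ = {(g,v) : det g = 1, v ∧ g v ∧ ⋯ ∧ g^{n-1} v = ω}` to
`k^{n-1}`, reading off the coefficients `a_1, ..., a_{n-1}` of `gⁿ(v)` in the cyclic basis
(the coefficient of `v` being `(-1)^{n-1}`), which induces a bijection from the set of
`SL(V)`-orbits on `Z̃` onto `k^{n-1}`: two points have the same image iff they are in the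
same orbit, and `Φ` is surjective. -/
theorem statement12 (k : Type*) [Field k] (V : Type*) [AddCommGroup V] [Module k V]
    (n : ℕ) (hn : 2 ≤ n) (hdim : Module.finrank k V = n)
    (ω : ExteriorAlgebra k V) (hω : ω ∈ ⋀[k]^n V) (hω0 : ω ≠ 0) :
    ∃ Φ : {gv : (V ≃ₗ[k] V) × V //
        LinearMap.det (gv.1 : V →ₗ[k] V) = 1 ∧ cyclicWedge k V n gv.1 gv.2 = ω} →
        (Fin (n - 1) → k),
      (∀ z, ((z.1.1 : V ≃ₗ[k] V) ^ n) z.1.2 =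
        ((-1 : k) ^ (n - 1)) • z.1.2 +
          ∑ i : Fin (n - 1), Φ z i • ((z.1.1 : V ≃ₗ[k] V) ^ ((i : ℕ) + 1)) z.1.2) ∧
      (∀ z z', Φ z = Φ z' ↔
        ∃ x : V ≃ₗ[k] V, LinearMap.det (x : V →ₗ[k] V) = 1 ∧
          z'.1.1 = x * z.1.1 * x⁻¹ ∧ z'.1.2 = x z.1.2) ∧
      Function.Surjective Φ := by
  classical
  obtain ⟨m, rfl⟩ : ∃ m, n = m + 1 := ⟨n - 1, by omega⟩
  have hli : ∀ (g : V ≃ₗ[k] V) (v : V), cyclicWedge k V (m + 1) g v = ω →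
      LinearIndependent k (fun i : Fin (m + 1) => (g ^ (i : ℕ)) v) := by
    intro g v hw
    by_contra h
    apply hω0
    rw [← hw]
    exact AlternatingMap.map_linearDependent (ExteriorAlgebra.ιMulti k (m + 1)) _ h
  have key := fun (g : V ≃ₗ[k] V) (v : V) (hdet : LinearMap.det (g : V →ₗ[k] V) = 1)
      (hw : cyclicWedge k V (m + 1) g v = ω) => aux_key hdim g v hdet (hli g v hw)
  choose Φ0 hΦ0 using key
  refine ⟨fun z => Φ0 z.1.1 z.1.2 z.2.1 z.2.2,
    fun z => hΦ0 z.1.1 z.1.2 z.2.1 z.2.2, ?_, ?_⟩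
  · rintro ⟨⟨g, v⟩, hgd, hgw⟩ ⟨⟨g', v'⟩, hgd', hgw'⟩
    constructor
    · intro hΦeq
      have hΦeq : Φ0 g v hgd hgw = Φ0 g' v' hgd' hgw' := hΦeq
      set b : Basis (Fin (m + 1)) k V :=
        basisOfLinearIndependentOfCardEqFinrank (hli g v hgw) (by simp [hdim]) with hbdef
      set b' : Basis (Fin (m + 1)) k V :=
        basisOfLinearIndependentOfCardEqFinrank (hli g' v' hgw') (by simp [hdim]) with hb'def
      have hb : ∀ i, b i = (g ^ (i : ℕ)) v := fun i => by simp [hbdef]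
      have hb' : ∀ i, b' i = (g' ^ (i : ℕ)) v' := fun i => by simp [hb'def]
      set x : V ≃ₗ[k] V := b.equiv b' (Equiv.refl _) with hxdef
      have hx : ∀ i, x (b i) = b' i := fun i => b.equiv_apply i b' (Equiv.refl _)
      have hb0 : b 0 = v := by rw [hb]; simp
      have hb'0 : b' 0 = v' := by rw [hb']; simp
      have hxv : x v = v' := by rw [← hb0, hx, hb'0]
      -- det x = 1
      have hxb : (⇑(x : V →ₗ[k] V) ∘ ⇑b) = ⇑b' := funext fun i => hx i
      have hdx := Basis.det_comp b (x : V →ₗ[k] V) ⇑b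
      rw [Basis.det_self, mul_one, hxb] at hdx
      have hωb : ExteriorAlgebra.ιMulti k (m + 1) ⇑b = ω := by
        rw [show ⇑b = fun i : Fin (m + 1) => (g ^ (i : ℕ)) v from funext hb]
        exact hgw
      have hωb' : ExteriorAlgebra.ιMulti k (m + 1) ⇑b' = ω := by
        rw [show ⇑b' = fun i : Fin (m + 1) => (g' ^ (i : ℕ)) v' from funext hb']
        exact hgw'
      have h1 : ω = b.det ⇑b' • ω := by
        conv_lhs => rw [← hωb']
        rw [aux_top b (ExteriorAlgebra.ιMulti k (m + 1)) ⇑b', hωb]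
      have hdb' : b.det ⇑b' = 1 := by
        have h2 : (b.det ⇑b' - 1) • ω = 0 := by
          rw [sub_smul, one_smul, ← h1, sub_self]
        rcases smul_eq_zero.1 h2 with h3 | h3
        · exact sub_eq_zero.1 h3
        · exact absurd h3 hω0
      have hdetx : LinearMap.det (x : V →ₗ[k] V) = 1 := by rw [← hdx, hdb']
      -- commutation
      have e2 : ∀ i : Fin m, (g ^ ((i : ℕ) + 1)) v = b i.succ := fun i => (hb i.succ).symm
      have e2' : ∀ i : Fin m, (g' ^ ((i : ℕ) + 1)) v' = b' i.succ := fun i => (hb' i.succ).symm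
      have hcomm : ∀ i : Fin (m + 1), x (g (b i)) = g' (x (b i)) := by
        intro i
        induction i using Fin.lastCases with
        | last =>
          have e1 : g (b (Fin.last m)) = (g ^ (m + 1)) v := by
            rw [hb]
            show g ((g ^ m) v) = (g ^ (m + 1)) v
            rw [pow_succ']; rfl
          have e1' : g' (b' (Fin.last m)) = (g' ^ (m + 1)) v' := by
            rw [hb']
            show g' ((g' ^ m) v') = (g' ^ (m + 1)) v'
            rw [pow_succ']; rfl
          have lhs : x (g (b (Fin.last m)))
              = ((-1 : k) ^ m) • v' + ∑ i : Fin m, Φ0 g v hgd hgw i • b' i.succ := by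
            rw [e1, hΦ0 g v hgd hgw]
            simp only [map_add, map_smul, map_sum]
            rw [hxv]
            congr 1
            refine Finset.sum_congr rfl fun i _ => ?_
            rw [e2 i, hx]
          have rhs : g' (x (b (Fin.last m)))
              = ((-1 : k) ^ m) • v' + ∑ i : Fin m, Φ0 g v hgd hgw i • b' i.succ := by
            rw [hx, e1', hΦ0 g' v' hgd' hgw', ← hΦeq]
            congr 1
            refine Finset.sum_congr rfl fun i _ => ?_
            rw [e2' i]
          rw [lhs, rhs]
        | cast j =>
          have h1 : g (b j.castSucc) = b j.succ := by
            rw [hb, hb]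
            show g ((g ^ (j : ℕ)) v) = (g ^ ((j : ℕ) + 1)) v
            rw [pow_succ']; rfl
          have h1' : g' (b' j.castSucc) = b' j.succ := by
            rw [hb', hb']
            show g' ((g' ^ (j : ℕ)) v') = (g' ^ ((j : ℕ) + 1)) v'
            rw [pow_succ']; rfl
          rw [h1, hx, hx, h1']
      have hcw : ((x : V →ₗ[k] V) ∘ₗ (g : V →ₗ[k] V))
          = ((g' : V →ₗ[k] V) ∘ₗ (x : V →ₗ[k] V)) :=
        b.ext fun i => by simpa using hcomm i
      refine ⟨x, hdetx, ?_, hxv.symm⟩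
      have hcw' : ∀ u : V, x (g u) = g' (x u) := fun u => by
        have h5 := LinearMap.congr_fun hcw u
        simpa using h5
      ext w
      calc g' w = g' (x (x.symm w)) := by rw [x.apply_symm_apply]
      _ = x (g (x.symm w)) := (hcw' _).symm
      _ = (x * g * x⁻¹) w := rfl
    · rintro ⟨x, hxd, hgg', hvv'⟩
      have hgg' : g' = x * g * x⁻¹ := hgg'
      have hvv' : v' = x v := hvv'
      subst hgg'
      subst hvv'
      have hconj : ∀ (j : ℕ) (w : V), ((x * g * x⁻¹) ^ j) (x w) = x ((g ^ j) w) := by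
        intro j w
        rw [conj_pow]
        show x ((g ^ j) (x⁻¹ (x w))) = x ((g ^ j) w)
        congr 1
        rw [show (x⁻¹ : V ≃ₗ[k] V) (x w) = x.symm (x w) from rfl, x.symm_apply_apply]
      have eq2 : ((x * g * x⁻¹) ^ (m + 1)) (x v)
          = ((-1 : k) ^ m) • (x v)
            + ∑ i : Fin m, Φ0 g v hgd hgw i • ((x * g * x⁻¹) ^ ((i : ℕ) + 1)) (x v) := by
        simp only [hconj]
        rw [hΦ0 g v hgd hgw]
        simp only [map_add, map_smul, map_sum]
      exact aux_uniq hdim _ _ (hli _ _ hgw') _ _ eq2 (hΦ0 _ _ hgd' hgw')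
  · intro a
    have hfin : Module.Finite k V := Module.finite_of_finrank_pos (by omega)
    let B0 : Basis (Fin (m + 1)) k V := Module.finBasisOfFinrankEq k V hdim
    obtain ⟨c, hc⟩ : ∃ c : k, ω = c • ExteriorAlgebra.ιMulti k (m + 1) ⇑B0 := by
      have hle : (⋀[k]^(m + 1) V : Submodule k (ExteriorAlgebra k V)) ≤
          k ∙ (ExteriorAlgebra.ιMulti k (m + 1) ⇑B0) := by
        rw [← ExteriorAlgebra.ιMulti_span_fixedDegree]
        refine Submodule.span_le.2 ?_
        rintro _ ⟨u, rfl⟩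
        exact Submodule.mem_span_singleton.2 ⟨B0.det u, (aux_top B0 _ u).symm⟩
      obtain ⟨c, hc⟩ := Submodule.mem_span_singleton.1 (hle hω)
      exact ⟨c, hc.symm⟩
    have hc0 : c ≠ 0 := by
      rintro rfl
      rw [zero_smul] at hc
      exact hω0 hc
    let w : Fin (m + 1) → kˣ := fun i => if i = 0 then Units.mk0 c hc0 else 1
    let B : Basis (Fin (m + 1)) k V := B0.unitsSMul w
    have hB : ∀ i, B i = (w i : k) • B0 i := fun i => B0.unitsSMul_apply i
    have hωB : ExteriorAlgebra.ιMulti k (m + 1) ⇑B = ω := by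
      rw [show ⇑B = fun i => (w i : k) • B0 i from funext hB]
      have hmsu := (ExteriorAlgebra.ιMulti k (m + 1)).toMultilinearMap.map_smul_univ
        (fun i => (w i : k)) ⇑B0
      have hprod : (∏ i, (w i : k)) = c := by
        rw [Fin.prod_univ_succ]
        simp [w, Fin.succ_ne_zero]
      rw [show (ExteriorAlgebra.ιMulti k (m + 1)) (fun i => (w i : k) • B0 i)
          = (ExteriorAlgebra.ιMulti k (m + 1)).toMultilinearMap (fun i => (w i : k) • B0 i)
          from rfl, hmsu, hprod, hc]
      rfl
    let r : Fin (m + 1) → k := Fin.cases ((-1 : k) ^ m) a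
    let C : Fin (m + 1) → V :=
      Function.update (fun i => B (finRotate (m + 1) i)) (Fin.last m) (∑ j, r j • B j)
    have hr0 : r 0 = (-1 : k) ^ m := rfl
    have hdetC : B.det C = 1 := by
      rw [show B.det C = (-1 : k) ^ m * r 0 from aux_det B r, hr0, ← mul_pow]
      norm_num
    have hC := (Basis.is_basis_iff_det B (v := C)).mpr (by rw [hdetC]; exact isUnit_one)
    let BC : Basis (Fin (m + 1)) k V := Basis.mk hC.1 hC.2.ge
    let g : V ≃ₗ[k] V := B.equiv BC (Equiv.refl _)
    have hg : ∀ i, g (B i) = C i := fun i => by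
      rw [Basis.equiv_apply]
      exact congrFun (Basis.coe_mk _ _) _
    have hdetg : LinearMap.det (g : V →ₗ[k] V) = 1 := by
      have h1 := Basis.det_comp B (g : V →ₗ[k] V) ⇑B
      rw [Basis.det_self, mul_one] at h1
      rw [← h1, show (⇑(g : V →ₗ[k] V) ∘ ⇑B) = C from funext hg, hdetC]
    set v : V := B 0 with hvdef
    have hgi : ∀ i : Fin (m + 1), (g ^ (i : ℕ)) v = B i := by
      have main : ∀ (j : ℕ) (hj : j < m + 1), (g ^ j) v = B ⟨j, hj⟩ := by
        intro j
        induction j with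
        | zero =>
          intro hj
          rw [pow_zero]
          rfl
        | succ p ih =>
          intro hj
          have hp : p < m + 1 := by omega
          have hstep : (g ^ (p + 1)) v = g ((g ^ p) v) := by rw [pow_succ']; rfl
          rw [hstep, ih hp, hg]
          have hne : (⟨p, hp⟩ : Fin (m + 1)) ≠ Fin.last m :=
            Fin.ne_of_val_ne (show p ≠ m by omega)
          rw [show C ⟨p, hp⟩ = B (finRotate (m + 1) ⟨p, hp⟩) from Function.update_of_ne hne _ _]
          congr 1
          rw [finRotate_succ_apply]
          apply Fin.ext
          rw [Fin.val_add_one_of_lt]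
          exact Fin.lt_last_iff_ne_last.mpr hne
      intro i
      exact main i i.isLt
    have hwedge : cyclicWedge k V (m + 1) g v = ω := by
      show ExteriorAlgebra.ιMulti k (m + 1) (fun i => (g ^ (i : ℕ)) v) = ω
      rw [show (fun i : Fin (m + 1) => (g ^ (i : ℕ)) v) = ⇑B from funext hgi]
      exact hωB
    refine ⟨⟨(g, v), hdetg, hwedge⟩, ?_⟩
    have e1 : (g ^ (m + 1)) v = ∑ j, r j • B j := by
      have h2 : (g ^ (m + 1)) v = g ((g ^ m) v) := by rw [pow_succ']; rfl
      rw [h2, show (g ^ m) v = B (Fin.last m) from hgi (Fin.last m), hg,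
        show C (Fin.last m) = ∑ j, r j • B j from Function.update_self _ _ _]
    have ea : (g ^ (m + 1)) v
        = ((-1 : k) ^ m) • v + ∑ i : Fin m, a i • (g ^ ((i : ℕ) + 1)) v := by
      rw [e1, Fin.sum_univ_succ]
      congr 1
      refine Finset.sum_congr rfl fun i _ => ?_
      rw [show r i.succ = a i from by simp [r], ← hgi i.succ]
      rfl
    exact aux_uniq hdim g v (hli g v hwedge) _ _ (hΦ0 g v hdetg hwedge) ea
end
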